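/- arXiv:1103.1448 — 2 statements merged into one kernel-verified Lean document; each statement's English description precedes it below -/
import Mathlib

section
/- Let x be a vector of L+1 nonnegative integers sorted in descending order, and let x* be obtained from x by decrementing the l-th component and incrementing the s-th component (where l < s, x_l > x_s, x_l > x_a for all a > l, and x_s < x_b for all b < s), then re-sorting in descending order. Then the sum over all pairs i < j of (x*_i - x*_j) equals the sum over all pairs i < j of (x_i - x_j) minus 2(s-l) if x_l ≥ x_s + 2, and equals it exactly if x_l = x_s + 1. -/
noncomputable def sortDesc {n : ℕ} (x : Fin n → ℤ) : Fin n → ℤ :=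
  fun i => x (Tuple.sort x (Fin.rev i))

noncomputable def kappa {n : ℕ} (x : Fin n → ℤ) : ℤ :=
  ∑ i : Fin n, ∑ j : Fin n, if i < j then sortDesc x i - sortDesc x j else 0

lemma two_kappa {n : ℕ} (x : Fin n → ℤ) :
    2 * kappa x = ∑ i : Fin n, ∑ j : Fin n, |x i - x j| := by
  have hy : Antitone (sortDesc x) := by
    intro i j hij
    exact Tuple.monotone_sort x (Fin.rev_le_rev.mpr hij)
  have h1 : ∀ i j : Fin n, |sortDesc x i - sortDesc x j| =
      (if i < j then sortDesc x i - sortDesc x j else 0) +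
      (if j < i then sortDesc x j - sortDesc x i else 0) := by
    intro i j
    rcases lt_trichotomy i j with h | h | h
    · rw [if_pos h, if_neg (asymm h), abs_of_nonneg (sub_nonneg.mpr (hy h.le))]; ring
    · subst h; simp
    · rw [if_neg (asymm h), if_pos h, abs_of_nonpos (sub_nonpos.mpr (hy h.le))]; ring
  have h2 : ∑ i : Fin n, ∑ j : Fin n, |sortDesc x i - sortDesc x j| = 2 * kappa x := by
    simp_rw [h1, Finset.sum_add_distrib]
    have h3 : ∑ i : Fin n, ∑ j : Fin n, (if j < i then sortDesc x j - sortDesc x i else 0)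
        = kappa x := Finset.sum_comm
    rw [h3, kappa]; ring
  rw [← h2]
  calc ∑ i : Fin n, ∑ j : Fin n, |sortDesc x i - sortDesc x j|
      = ∑ i : Fin n, ∑ j : Fin n,
          |x (((Fin.revPerm (n := n)).trans (Tuple.sort x)) i)
            - x (((Fin.revPerm (n := n)).trans (Tuple.sort x)) j)| := rfl
    _ = ∑ i : Fin n, ∑ j : Fin n,
          |x (((Fin.revPerm (n := n)).trans (Tuple.sort x)) i) - x j| := by
        refine Finset.sum_congr rfl fun i _ => ?_
        exact Equiv.sum_comp ((Fin.revPerm (n := n)).trans (Tuple.sort x))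
          (fun j => |x (((Fin.revPerm (n := n)).trans (Tuple.sort x)) i) - x j|)
    _ = ∑ i : Fin n, ∑ j : Fin n, |x i - x j| :=
        Equiv.sum_comp ((Fin.revPerm (n := n)).trans (Tuple.sort x))
          (fun i => ∑ j : Fin n, |x i - x j|)

lemma sum_ind_lt {n : ℕ} (l : Fin n) :
    (∑ j : Fin n, if j < l then (1:ℤ) else 0) = (l : ℤ) := by
  rw [Finset.sum_boole]
  norm_num
  rw [show (Finset.filter (fun j => j < l) Finset.univ) = Finset.Iio l by ext j; simp,
    Fin.card_Iio]

lemma sum_ind_gt {n : ℕ} (l : Fin n) :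
    (∑ j : Fin n, if l < j then (1:ℤ) else 0) = ((n:ℤ) - 1 - (l:ℤ)) := by
  rw [Finset.sum_boole]
  rw [show (Finset.filter (fun j => l < j) Finset.univ) = Finset.Ioi l by ext j; simp,
    Fin.card_Ioi]
  have := l.isLt; push_cast; omega

/-- Lemma B-1: effect of a balancing interchange on the imbalance index. -/
theorem stmt0 {L : ℕ} (x : Fin (L + 1) → ℤ) (hnn : ∀ i, 0 ≤ x i)
    (hsort : Antitone x) (l s : Fin (L + 1)) (hls : l < s)
    (hgt : x s < x l)
    (hl : ∀ a, l < a → x a < x l) (hs : ∀ b, b < s → x s < x b)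
    (x' : Fin (L + 1) → ℤ)
    (hx' : x' = fun k => if k = l then x l - 1 else if k = s then x s + 1 else x k) :
    (x s + 2 ≤ x l → kappa x' = kappa x - 2 * ((s : ℤ) - (l : ℤ))) ∧
    (x l = x s + 1 → kappa x' = kappa x) := by
  subst hx'
  have hne : l ≠ s := hls.ne
  have hnel : s ≠ l := hls.ne'
  have H := two_kappa (fun k => if k = l then x l - 1 else if k = s then x s + 1 else x k)
  have H0 := two_kappa x
  constructor
  · intro h2
    have hd : ∀ i j : Fin (L + 1),
        |(if i = l then x l - 1 else if i = s then x s + 1 else x i) -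
          (if j = l then x l - 1 else if j = s then x s + 1 else x j)|
        = |x i - x j|
          + (if i = l then (1:ℤ) else 0) *
              ((if j < l then (1:ℤ) else 0) - (if l < j then 1 else 0))
          + (if i = s then (1:ℤ) else 0) *
              ((if s < j then (1:ℤ) else 0) - (if j < s then 1 else 0))
          + ((if i < l then (1:ℤ) else 0) - (if l < i then 1 else 0)) *
              (if j = l then (1:ℤ) else 0)
          + ((if s < i then (1:ℤ) else 0) - (if i < s then 1 else 0)) *
              (if j = s then (1:ℤ) else 0) := by
      intro i j
      by_cases hil : i = l
      · by_cases hjl : j = l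
        · simp [hil, hjl, hne]
        · by_cases hjs : j = s
          · simp [hil, hjs, hne, hnel, hls, asymm hls]
            simp only [Int.abs_eq_natAbs]; omega
          · rcases lt_or_gt_of_ne hjl with h | h
            · have hx := hsort h.le
              simp [hil, hne, hjl, hjs, h, asymm h, not_lt.mpr (le_of_lt h)]
              simp only [Int.abs_eq_natAbs]; omega
            · have hx := hl j h
              simp [hil, hne, hjl, hjs, h, asymm h, not_lt.mpr (le_of_lt h)]
              simp only [Int.abs_eq_natAbs]; omega
      · by_cases his : i = s
        · by_cases hjl : j = l
          · simp [his, hjl, hne, hnel, hls, asymm hls]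
            simp only [Int.abs_eq_natAbs]; omega
          · by_cases hjs : j = s
            · simp [his, hjs, hnel]
            · rcases lt_or_gt_of_ne hjs with h | h
              · have hx := hs j h
                simp [his, hnel, hjl, hjs, h, asymm h, not_lt.mpr (le_of_lt h)]
                simp only [Int.abs_eq_natAbs]; omega
              · have hx := hsort h.le
                simp [his, hnel, hjl, hjs, h, asymm h, not_lt.mpr (le_of_lt h)]
                simp only [Int.abs_eq_natAbs]; omega
        · by_cases hjl : j = l
          · rcases lt_or_gt_of_ne hil with h | h
            · have hx := hsort h.le
              simp [hjl, hne, hil, his, h, asymm h, not_lt.mpr (le_of_lt h)]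
              simp only [Int.abs_eq_natAbs]; omega
            · have hx := hl i h
              simp [hjl, hne, hil, his, h, asymm h, not_lt.mpr (le_of_lt h)]
              simp only [Int.abs_eq_natAbs]; omega
          · by_cases hjs : j = s
            · rcases lt_or_gt_of_ne his with h | h
              · have hx := hs i h
                simp [hjs, hnel, hil, his, hjl, h, asymm h, not_lt.mpr (le_of_lt h)]
                simp only [Int.abs_eq_natAbs]; omega
              · have hx := hsort h.le
                simp [hjs, hnel, hil, his, hjl, h, asymm h, not_lt.mpr (le_of_lt h)]
                simp only [Int.abs_eq_natAbs]; omega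
            · simp [hil, his, hjl, hjs]
    have hsum : (∑ i : Fin (L + 1), ∑ j : Fin (L + 1),
        |(if i = l then x l - 1 else if i = s then x s + 1 else x i) -
          (if j = l then x l - 1 else if j = s then x s + 1 else x j)|)
        = (∑ i : Fin (L + 1), ∑ j : Fin (L + 1), |x i - x j|)
          - 4 * ((s : ℤ) - (l : ℤ)) := by
      simp_rw [hd, Finset.sum_add_distrib]
      rw [← Finset.sum_mul_sum, ← Finset.sum_mul_sum, ← Finset.sum_mul_sum,
        ← Finset.sum_mul_sum]
      have hone1 : (∑ i : Fin (L + 1), (if i = l then (1:ℤ) else 0)) = 1 := by simp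
      have hone2 : (∑ i : Fin (L + 1), (if i = s then (1:ℤ) else 0)) = 1 := by simp
      have hσ : (∑ j : Fin (L + 1),
          ((if j < l then (1:ℤ) else 0) - (if l < j then 1 else 0)))
          = (l : ℤ) - ((L : ℤ) - (l : ℤ)) := by
        rw [Finset.sum_sub_distrib, sum_ind_lt, sum_ind_gt]
        push_cast; ring
      have hτ : (∑ j : Fin (L + 1),
          ((if s < j then (1:ℤ) else 0) - (if j < s then 1 else 0)))
          = ((L : ℤ) - (s : ℤ)) - (s : ℤ) := by
        rw [Finset.sum_sub_distrib, sum_ind_lt, sum_ind_gt]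
        push_cast; ring
      rw [hone1, hone2, hσ, hτ]
      ring
    rw [hsum] at H
    omega
  · intro heq
    have hswap : (fun k => if k = l then x l - 1 else if k = s then x s + 1 else x k)
        = fun k => x (Equiv.swap l s k) := by
      funext k
      by_cases h1 : k = l
      · simp [h1, Equiv.swap_apply_left]; omega
      · by_cases h2 : k = s
        · simp [h2, Equiv.swap_apply_right]; omega
        · simp [h1, h2, Equiv.swap_apply_of_ne_of_ne h1 h2]
    rw [hswap] at H
    have hinv : (∑ i : Fin (L + 1), ∑ j : Fin (L + 1),
        |x (Equiv.swap l s i) - x (Equiv.swap l s j)|)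
        = ∑ i : Fin (L + 1), ∑ j : Fin (L + 1), |x i - x j| := by
      calc (∑ i : Fin (L + 1), ∑ j : Fin (L + 1),
            |x (Equiv.swap l s i) - x (Equiv.swap l s j)|)
          = ∑ i : Fin (L + 1), ∑ j : Fin (L + 1), |x (Equiv.swap l s i) - x j| := by
            refine Finset.sum_congr rfl fun i _ => ?_
            exact Equiv.sum_comp (Equiv.swap l s) (fun j => |x (Equiv.swap l s i) - x j|)
        _ = ∑ i : Fin (L + 1), ∑ j : Fin (L + 1), |x i - x j| :=
            Equiv.sum_comp (Equiv.swap l s) (fun i => ∑ j : Fin (L + 1), |x i - x j|)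
    rw [show (∑ i : Fin (L + 1), ∑ j : Fin (L + 1),
        |(if i = l then x l - 1 else if i = s then x s + 1 else x i) -
          if j = l then x l - 1 else if j = s then x s + 1 else x j|)
        = ∑ i : Fin (L + 1), ∑ j : Fin (L + 1),
            |x (Equiv.swap l s i) - x (Equiv.swap l s j)| from by
      refine Finset.sum_congr rfl fun i _ => Finset.sum_congr rfl fun j _ => ?_
      rw [congrFun hswap i, congrFun hswap j]] at H
    rw [hinv] at H
    rw [hswap]
    omega
end

section
/- For integer vectors x ∈ ℤ^n with fixed sum Σ x_i = M, the minimum of S(x) = Σ_{i<j} |x_i − x_j| is attained by any vector whose components pairwise differ by at most 1, and equals r·(n−r) where r = M mod n. -/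
noncomputable def pairAbs {n : ℕ} (x : Fin n → ℤ) : ℤ :=
  ∑ i : Fin n, ∑ j : Fin n, if i < j then |x i - x j| else 0

lemma two_mul_pairAbs {n : ℕ} (x : Fin n → ℤ) :
    2 * pairAbs x = ∑ i : Fin n, ∑ j : Fin n, |x i - x j| := by
  unfold pairAbs
  have h2 : ∑ i : Fin n, ∑ j : Fin n, (if i < j then |x i - x j| else 0)
      = ∑ i : Fin n, ∑ j : Fin n, (if j < i then |x i - x j| else 0) := by
    rw [Finset.sum_comm]
    refine Finset.sum_congr rfl fun i _ => Finset.sum_congr rfl fun j _ => ?_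
    rw [abs_sub_comm]
  calc 2 * ∑ i : Fin n, ∑ j : Fin n, (if i < j then |x i - x j| else 0)
      = (∑ i : Fin n, ∑ j : Fin n, (if i < j then |x i - x j| else 0))
        + ∑ i : Fin n, ∑ j : Fin n, (if j < i then |x i - x j| else 0) := by
        rw [two_mul, h2]
    _ = ∑ i : Fin n, ∑ j : Fin n, |x i - x j| := by
        rw [← Finset.sum_add_distrib]
        refine Finset.sum_congr rfl fun i _ => ?_
        rw [← Finset.sum_add_distrib]
        refine Finset.sum_congr rfl fun j _ => ?_
        rcases lt_trichotomy i j with h | h | h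
        · simp [h, asymm h]
        · subst h; simp
        · simp [h, asymm h]

lemma pairAbs_nonneg {n : ℕ} (x : Fin n → ℤ) : 0 ≤ pairAbs x := by
  unfold pairAbs
  refine Finset.sum_nonneg fun i _ => Finset.sum_nonneg fun j _ => ?_
  split <;> simp [abs_nonneg]

lemma balanced_eq {n : ℕ} (hn : 0 < n) (M r : ℤ) (hr : r = M % (n : ℤ))
    (x : Fin n → ℤ) (hsum : (∑ i, x i) = M) (hdiff : ∀ i j, |x i - x j| ≤ 1) :
    pairAbs x = r * ((n : ℤ) - r) := by
  obtain ⟨i0, -, hmin⟩ := Finset.exists_min_image Finset.univ x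
    ⟨⟨0, hn⟩, Finset.mem_univ _⟩
  set m := x i0 with hm
  have hval : ∀ i, x i = m ∨ x i = m + 1 := by
    intro i
    have h1 := hmin i (Finset.mem_univ i)
    have h2 := hdiff i i0
    rw [abs_le] at h2
    omega
  classical
  set A := Finset.univ.filter (fun i => x i = m + 1) with hA
  set k := A.card with hk
  have hkn : k ≤ n := by
    calc k ≤ (Finset.univ : Finset (Fin n)).card := Finset.card_filter_le _ _
    _ = n := by simp
  have hxi : ∀ i, x i = m + (if i ∈ A then 1 else 0) := by
    intro i
    rcases hval i with h | h
    · have : i ∉ A := by simp [hA, h]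
      simp [this, h]
    · have : i ∈ A := by simp [hA, h]
      simp [this, h]
  have hsum' : M = n * m + k := by
    rw [← hsum]
    calc ∑ i, x i = ∑ i : Fin n, (m + if i ∈ A then (1:ℤ) else 0) :=
          Finset.sum_congr rfl fun i _ => hxi i
      _ = n * m + k := by
          rw [Finset.sum_add_distrib, Finset.sum_const, Finset.sum_ite_mem]
          simp [mul_comm]
          exact hk.symm
  -- compute the double sum
  have inner : ∀ i : Fin n, (∑ j, |x i - x j|) = if i ∈ A then ((n:ℤ) - k) else (k:ℤ) := by
    intro i
    have step : ∀ j, |x i - x j| = if (i ∈ A) = (j ∈ A) then 0 else 1 := by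
      intro j
      rw [hxi i, hxi j]
      by_cases hi : i ∈ A <;> by_cases hj : j ∈ A <;> simp [hi, hj]
    by_cases hi : i ∈ A
    · have : ∀ j, |x i - x j| = 1 - (if j ∈ A then 1 else 0) := by
        intro j; rw [step j]; by_cases hj : j ∈ A <;> simp [hi, hj]
      rw [Finset.sum_congr rfl fun j _ => this j, Finset.sum_sub_distrib,
        Finset.sum_const, Finset.sum_ite_mem]
      simp [hi]
      exact hk.symm
    · have : ∀ j, |x i - x j| = (if j ∈ A then 1 else 0) := by
        intro j; rw [step j]; by_cases hj : j ∈ A <;> simp [hi, hj]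
      rw [Finset.sum_congr rfl fun j _ => this j, Finset.sum_ite_mem]
      simp [hi]
      exact hk.symm
  have hT : ∑ i : Fin n, ∑ j : Fin n, |x i - x j| = 2 * ((k : ℤ) * ((n:ℤ) - k)) := by
    rw [Finset.sum_congr rfl fun i _ => inner i]
    have hpt : ∀ i : Fin n, (if i ∈ A then ((n:ℤ) - k) else (k:ℤ))
        = (k:ℤ) + (if i ∈ A then ((n:ℤ) - 2*k) else 0) := by
      intro i; split <;> ring
    rw [Finset.sum_congr rfl fun i _ => hpt i, Finset.sum_add_distrib,
      Finset.sum_const, Finset.sum_ite_mem, Finset.univ_inter, Finset.sum_const]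
    simp only [nsmul_eq_mul, Finset.card_univ, Fintype.card_fin, ← hk]
    ring
  have hpa : pairAbs x = (k : ℤ) * ((n:ℤ) - k) := by
    have := two_mul_pairAbs x
    rw [hT] at this
    linarith
  -- now k(n-k) = r(n-r)
  have hrk : r = (k : ℤ) % n := by
    rw [hr, hsum', add_comm]
    rw [Int.add_mul_emod_self_left]
  rcases eq_or_lt_of_le hkn with hkeq | hklt
  · have hr0 : r = 0 := by rw [hrk, hkeq]; simp
    rw [hpa, hr0, hkeq]; ring
  · have : r = (k : ℤ) := by
      rw [hrk, Int.emod_eq_of_lt (Int.natCast_nonneg k) (by exact_mod_cast hklt)]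
    rw [hpa, this]

lemma lower_bound {n : ℕ} (hn : 0 < n) (M r : ℤ) (hr : r = M % (n : ℤ))
    (x : Fin n → ℤ) (hsum : (∑ i, x i) = M) :
    r * ((n : ℤ) - r) ≤ pairAbs x := by
  classical
  have hnz : (n : ℤ) ≠ 0 := by exact_mod_cast hn.ne'
  have hnpos : (0 : ℤ) < n := by exact_mod_cast hn
  have hr0 : 0 ≤ r := hr ▸ Int.emod_nonneg M hnz
  have hrn : r < n := hr ▸ Int.emod_lt_of_pos M hnpos
  set q := M / (n : ℤ) with hq
  have hM : (n : ℤ) * q + r = M := by rw [hq, hr]; exact Int.mul_ediv_add_emod M n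
  rcases eq_or_lt_of_le hr0 with h0 | hrpos
  · rw [← h0]; simpa using pairAbs_nonneg x
  set rn := r.toNat with hrn'
  have hrcast : (rn : ℤ) = r := Int.toNat_of_nonneg hr0
  have hrn1 : 1 ≤ rn := by omega
  have hrn2 : rn < n := by exact_mod_cast hrcast ▸ hrn
  -- choose a maximizing subset of size rn
  have hne : ((Finset.univ : Finset (Fin n)).powersetCard rn).Nonempty := by
    rw [Finset.powersetCard_nonempty]
    simpa using hrn2.le
  obtain ⟨A, hAmem, hmax⟩ := Finset.exists_max_image _ (fun A => ∑ i ∈ A, x i) hne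
  rw [Finset.mem_powersetCard] at hAmem
  have hAcard : A.card = rn := hAmem.2
  have hAne : A.Nonempty := Finset.card_pos.mp (by omega)
  -- swap property
  have hswap : ∀ i ∈ A, ∀ j, j ∉ A → x j ≤ x i := by
    intro i hi j hj
    have hji : j ∉ A.erase i := fun h => hj (Finset.mem_of_mem_erase h)
    have hcard' : (insert j (A.erase i)).card = rn := by
      rw [Finset.card_insert_of_notMem hji, Finset.card_erase_of_mem hi, hAcard]
      omega
    have hmem' : insert j (A.erase i) ∈ (Finset.univ : Finset (Fin n)).powersetCard rn := by
      rw [Finset.mem_powersetCard]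
      exact ⟨Finset.subset_univ _, hcard'⟩
    have := hmax _ hmem'
    rw [Finset.sum_insert hji] at this
    have herase : ∑ k ∈ A.erase i, x k = (∑ k ∈ A, x k) - x i := by
      rw [← Finset.sum_erase_add A x hi]; ring
    rw [herase] at this
    linarith
  -- lower bound on the sum over A
  set SA := ∑ i ∈ A, x i with hSA
  have hSAlb : (rn : ℤ) * (q + 1) ≤ SA := by
    obtain ⟨i0, hi0, hmin⟩ := Finset.exists_min_image A x hAne
    by_cases hc : q + 1 ≤ x i0
    · calc (rn : ℤ) * (q + 1) = ∑ _i ∈ A, (q + 1) := by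
            rw [Finset.sum_const, hAcard, nsmul_eq_mul]
        _ ≤ SA := Finset.sum_le_sum fun i hi => le_trans hc (hmin i hi)
    · push_neg at hc
      have hc' : x i0 ≤ q := by omega
      have hcompl : ∑ j ∈ Aᶜ, x j ≤ ((n : ℤ) - rn) * q := by
        have hub : ∀ j ∈ Aᶜ, x j ≤ q := by
          intro j hj
          rw [Finset.mem_compl] at hj
          exact le_trans (hswap i0 hi0 j hj) hc'
        calc ∑ j ∈ Aᶜ, x j ≤ ∑ _j ∈ Aᶜ, q := Finset.sum_le_sum hub
          _ = ((n : ℤ) - rn) * q := by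
              rw [Finset.sum_const, Finset.card_compl, hAcard, nsmul_eq_mul]
              have : ((n - rn : ℕ) : ℤ) = (n : ℤ) - rn := by
                push_cast [Nat.cast_sub hrn2.le]; ring
              rw [Fintype.card_fin, this]
      have htot : SA + ∑ j ∈ Aᶜ, x j = M := by
        rw [hSA, Finset.sum_add_sum_compl, hsum]
      have : SA ≥ M - ((n : ℤ) - rn) * q := by linarith
      calc (rn : ℤ) * (q + 1) = M - ((n:ℤ) - rn) * q := by
            rw [← hM, hrcast]; ring
        _ ≤ SA := this
  -- pairAbs lower bound via the cross sum
  have hcross : ∑ i ∈ A, ∑ j ∈ Aᶜ, (x i - x j) ≤ ∑ i ∈ A, ∑ j ∈ Aᶜ, |x i - x j| :=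
    Finset.sum_le_sum fun i _ => Finset.sum_le_sum fun j _ => le_abs_self _
  have hcross_val : ∑ i ∈ A, ∑ j ∈ Aᶜ, (x i - x j)
      = ((n : ℤ) - rn) * SA - (rn : ℤ) * (M - SA) := by
    have hSC : ∑ j ∈ Aᶜ, x j = M - SA := by
      have := Finset.sum_add_sum_compl A x
      rw [hsum] at this; linarith [this]
    have hcardc : (Aᶜ.card : ℤ) = (n : ℤ) - rn := by
      rw [Finset.card_compl, hAcard, Fintype.card_fin]
      push_cast [Nat.cast_sub hrn2.le]; ring
    calc ∑ i ∈ A, ∑ j ∈ Aᶜ, (x i - x j)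
        = ∑ i ∈ A, ((Aᶜ.card : ℤ) * x i - ∑ j ∈ Aᶜ, x j) := by
          refine Finset.sum_congr rfl fun i _ => ?_
          rw [Finset.sum_sub_distrib, Finset.sum_const, nsmul_eq_mul]
      _ = (Aᶜ.card : ℤ) * SA - (A.card : ℤ) * ∑ j ∈ Aᶜ, x j := by
          rw [Finset.sum_sub_distrib, Finset.sum_const, ← Finset.mul_sum, nsmul_eq_mul]
      _ = ((n : ℤ) - rn) * SA - (rn : ℤ) * (M - SA) := by
          rw [hcardc, hSC, hAcard]
  have hhalf : 2 * ∑ i ∈ A, ∑ j ∈ Aᶜ, |x i - x j| ≤ 2 * pairAbs x := by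
    rw [two_mul_pairAbs]
    have hsplit : ∑ i : Fin n, ∑ j : Fin n, |x i - x j|
        = (∑ i ∈ A, ∑ j : Fin n, |x i - x j|) + ∑ i ∈ Aᶜ, ∑ j : Fin n, |x i - x j| := by
      rw [Finset.sum_add_sum_compl]
    have h1 : ∑ i ∈ A, ∑ j ∈ Aᶜ, |x i - x j| ≤ ∑ i ∈ A, ∑ j : Fin n, |x i - x j| := by
      refine Finset.sum_le_sum fun i _ => ?_
      exact Finset.sum_le_sum_of_subset_of_nonneg (Finset.subset_univ _)
        (fun j _ _ => abs_nonneg _)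
    have h2 : ∑ i ∈ A, ∑ j ∈ Aᶜ, |x i - x j| ≤ ∑ i ∈ Aᶜ, ∑ j : Fin n, |x i - x j| := by
      have hsym : ∑ i ∈ A, ∑ j ∈ Aᶜ, |x i - x j| = ∑ i ∈ Aᶜ, ∑ j ∈ A, |x i - x j| := by
        rw [Finset.sum_comm]
        refine Finset.sum_congr rfl fun i _ => Finset.sum_congr rfl fun j _ => ?_
        rw [abs_sub_comm]
      rw [hsym]
      refine Finset.sum_le_sum fun i _ => ?_
      exact Finset.sum_le_sum_of_subset_of_nonneg (Finset.subset_univ _)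
        (fun j _ _ => abs_nonneg _)
    rw [hsplit]; linarith
  -- combine
  have hfinal : r * ((n : ℤ) - r) ≤ ∑ i ∈ A, ∑ j ∈ Aᶜ, (x i - x j) := by
    rw [hcross_val, ← hrcast]
    have hn' : (0:ℤ) ≤ (n:ℤ) := hnpos.le
    nlinarith [hSAlb, hM, hrcast]
  linarith

/-- Over integer vectors of fixed sum M, the minimum of the sum of absolute
pairwise differences is r(n-r) where r = M mod n, attained by any vector whose
components pairwise differ by at most 1. -/
theorem stmt10 {n : ℕ} (hn : 0 < n) (M r : ℤ) (hr : r = M % (n : ℤ)) :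
    (∀ x : Fin n → ℤ, (∑ i, x i) = M → r * ((n : ℤ) - r) ≤ pairAbs x) ∧
    (∀ x : Fin n → ℤ, (∑ i, x i) = M → (∀ i j, |x i - x j| ≤ 1) →
      pairAbs x = r * ((n : ℤ) - r)) := by
  exact ⟨fun x hx => lower_bound hn M r hr x hx,
    fun x hx hd => balanced_eq hn M r hr x hx hd⟩
end
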